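/- (Mathematical core of the main theorem.) Let (D, d, f) be a normal MCO with d ≥ 2 that is collision-free with gap vector λ, in which no two distinct Pareto-optimal solutions are equivalent, and let m = max over x ∈ D and indices i of f_i(x). Then for every w ∈ W_d with w_i > 0 for all i, there exists w′ ∈ W_d with ‖w − w′‖₁ ≤ ⟨λ, w⟩/(m·d) such that the linearization y ↦ ⟨f(y), w′⟩ attains its minimum over D at a unique point x, and this x is a Pareto-optimal solution of the MCO. -/

import Mathlib

open Finset

/-- Membership in the weight set `W_d`: each coordinate is in `[0,1)` and coordinates sum to 1. -/
def memW (d : ℕ) (w : Fin d → ℝ) : Prop :=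
  (∀ i, 0 ≤ w i ∧ w i < 1) ∧ (∑ i, w i) = 1

/-- Linearization `⟨f(x), w⟩ = ∑ i, w i * f x i`. -/
def lin {D : Type} {d : ℕ} (f : D → Fin d → ℝ) (w : Fin d → ℝ) (x : D) : ℝ :=
  ∑ i, w i * f x i

/-- `x` is a Pareto-optimal solution: no `y` dominates it strictly. -/
def ParetoOpt {D : Type} {d : ℕ} (f : D → Fin d → ℝ) (x : D) : Prop :=
  ¬ ∃ y : D, (∀ i, f y i ≤ f x i) ∧ f y ≠ f x

/-- The `ℓ₁` norm of a vector in `ℝ^d`. -/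
def l1norm {d : ℕ} (v : Fin d → ℝ) : ℝ := ∑ i, |v i|

/-- The MCO `(D, d, f)` is normal. -/
def NormalMCO {D : Type} {d : ℕ} (f : D → Fin d → ℝ) : Prop :=
  (∀ i : Fin d, ∃! x : D, f x i = 0) ∧
  (∀ (i j : Fin d) (x y : D), i ≠ j → f x i = 0 → f y j = 0 → x ≠ y)

/-- The MCO `(D, d, f)` is collision-free with gap vector `lam`. -/
def CollisionFree {D : Type} {d : ℕ} (f : D → Fin d → ℝ) (lam : Fin d → ℝ) : Prop :=
  ∀ (i : Fin d) (x y : D), x ≠ y → lam i < |f x i - f y i|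

/-! Perturb `w` along the moment curve `w + (t, t², …, tᵈ)` and renormalise. For distinct
`x, y` the tie `⟨f x - f y, w + (t, …, tᵈ)⟩ = 0` is a polynomial equation in `t` whose
coefficient of `tⁱ⁺¹` is `f x i - f y i`; collision-freeness makes it nonzero, so only finitely
many `t` produce a tie. A small `t` off this finite set keeps `w'` within the prescribed `ℓ₁`
distance and makes the linearization injective on `D`, so its minimizer is unique, and a point
dominating it would tie with it, so it is Pareto-optimal. Normality (with `d ≥ 2`) gives two
distinct points, hence `m > 0` and a positive budget. -/

section

variable {D : Type} {d : ℕ}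

lemma lin_smul (f : D → Fin d → ℝ) (r : ℝ) (w : Fin d → ℝ) (x : D) :
    lin f (r • w) x = r * lin f w x := by
  simp only [lin, Pi.smul_apply, smul_eq_mul, Finset.mul_sum, mul_assoc]

lemma lin_sub_lin (f : D → Fin d → ℝ) (w : Fin d → ℝ) (x y : D) :
    lin f w x - lin f w y = ∑ i, w i * (f x i - f y i) := by
  simp only [lin, ← Finset.sum_sub_distrib, mul_sub]

lemma finite_setOf_add_sum_mul_pow_eq_zero (c : ℝ) {a : Fin d → ℝ} (ha : a ≠ 0) :
    {t : ℝ | c + ∑ i, a i * t ^ ((i : ℕ) + 1) = 0}.Finite := by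
  set P : Polynomial ℝ := .C c + ∑ i : Fin d, .C (a i) * .X ^ ((i : ℕ) + 1)
  have hcoeff (i : Fin d) : P.coeff ((i : ℕ) + 1) = a i := by
    simp [P, Polynomial.finsetSum_coeff, Fin.val_inj]
  have hP : P ≠ 0 := by
    obtain ⟨i, hi⟩ := Function.ne_iff.mp ha
    exact fun h => hi (by rw [← hcoeff i, h, Polynomial.coeff_zero, Pi.zero_apply])
  refine (Polynomial.finite_setOfPred_isRoot hP).subset fun t ht => ?_
  simpa [P, Polynomial.eval_finsetSum] using ht

def momentCurve (d : ℕ) (t : ℝ) : Fin d → ℝ := fun i => t ^ ((i : ℕ) + 1)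

lemma finite_setOf_not_injective_lin_add_momentCurve [Finite D]
    {f : D → Fin d → ℝ} (hf : Function.Injective f) (w : Fin d → ℝ) :
    {t : ℝ | ¬ Function.Injective (lin f (w + momentCurve d t))}.Finite := by
  refine (Set.finite_iUnion fun x : D => Set.finite_iUnion fun y : D =>
    Set.finite_iUnion fun hxy : x ≠ y => finite_setOf_add_sum_mul_pow_eq_zero
      (∑ i, w i * (f x i - f y i)) (sub_ne_zero.mpr (hf.ne hxy))).subset fun t ht => ?_
  obtain ⟨x, y, heq, hxy⟩ := Function.not_injective_iff.mp ht
  have hdiff := lin_sub_lin f (w + momentCurve d t) x y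
  rw [heq, sub_self] at hdiff
  simp only [Set.mem_iUnion, Set.mem_ofPred_eq]
  refine ⟨x, y, hxy, ?_⟩
  rw [hdiff, ← Finset.sum_add_distrib]
  exact Finset.sum_congr rfl fun i _ => by
    simp only [Pi.add_apply, Pi.sub_apply, momentCurve]
    ring

lemma exists_injective_lin_add_momentCurve [Finite D]
    {f : D → Fin d → ℝ} (hf : Function.Injective f) (w : Fin d → ℝ) {ε : ℝ} (hε : 0 < ε) :
    ∃ t ∈ Set.Ioo 0 ε, Function.Injective (lin f (w + momentCurve d t)) := by
  obtain ⟨t, ht, hinj⟩ :=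
    ((Set.Ioo_infinite hε).sdiff (finite_setOf_not_injective_lin_add_momentCurve hf w)).nonempty
  exact ⟨t, ht, not_not.mp hinj⟩

lemma sum_momentCurve_le {t : ℝ} (ht₀ : 0 ≤ t) (ht₁ : t ≤ 1) :
    ∑ i, momentCurve d t i ≤ d * t := by
  calc ∑ i, momentCurve d t i ≤ ∑ _i : Fin d, t :=
        Finset.sum_le_sum fun i _ => pow_le_of_le_one ht₀ ht₁ (Nat.succ_ne_zero _)
    _ = d * t := by simp

lemma memW_inv_sum_smul (hd : 2 ≤ d) {v : Fin d → ℝ} (hv : ∀ i, 0 < v i) :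
    memW d ((∑ i, v i)⁻¹ • v) := by
  have hsum : 0 < ∑ i, v i :=
    Finset.sum_pos (fun i _ => hv i) (Finset.univ_nonempty_iff.mpr ⟨⟨0, by omega⟩⟩)
  have : Nontrivial (Fin d) := Fin.nontrivial_iff_two_le.mpr hd
  refine ⟨fun i => ⟨?_, ?_⟩, ?_⟩
  · exact mul_nonneg (inv_nonneg.mpr hsum.le) (hv i).le
  · obtain ⟨j, hji⟩ := exists_ne i
    have : v i < ∑ k, v k := Finset.single_lt_sum hji (Finset.mem_univ _) (Finset.mem_univ _)
      (hv j) fun k _ _ => (hv k).le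
    simpa [inv_mul_lt_iff₀ hsum] using this
  · simp [← Finset.mul_sum, hsum.ne']

lemma l1norm_sub_inv_sum_smul_add_le {w μ : Fin d → ℝ} (hw : ∀ i, 0 ≤ w i)
    (hw₁ : ∑ i, w i = 1) (hμ : ∀ i, 0 ≤ μ i) :
    l1norm (w - (∑ i, (w + μ) i)⁻¹ • (w + μ)) ≤ 2 * ∑ i, μ i := by
  set M := ∑ i, μ i
  have hM : 0 ≤ M := Finset.sum_nonneg fun i _ => hμ i
  have hs : ∑ i, (w + μ) i = 1 + M := by simp [Finset.sum_add_distrib, hw₁, M]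
  have hcoord (i : Fin d) : |(w - (1 + M)⁻¹ • (w + μ)) i| ≤ M * w i + μ i := by
    have hi : (w - (1 + M)⁻¹ • (w + μ)) i = (M * w i - μ i) / (1 + M) := by
      simp only [Pi.sub_apply, Pi.smul_apply, Pi.add_apply, smul_eq_mul]
      field_simp
      ring
    have hnum : 0 ≤ M * w i + μ i := add_nonneg (mul_nonneg hM (hw i)) (hμ i)
    have hs₀ : 0 < 1 + M := by linarith
    rw [hi, abs_div, abs_of_pos hs₀, div_le_iff₀ hs₀]
    calc |M * w i - μ i| ≤ |M * w i| + |μ i| := abs_sub _ _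
      _ = M * w i + μ i := by rw [abs_of_nonneg (mul_nonneg hM (hw i)), abs_of_nonneg (hμ i)]
      _ ≤ (M * w i + μ i) * (1 + M) := le_mul_of_one_le_right hnum (by linarith)
  calc l1norm (w - (∑ i, (w + μ) i)⁻¹ • (w + μ)) ≤ ∑ i, (M * w i + μ i) := by
        rw [hs]; exact Finset.sum_le_sum fun i _ => hcoord i
    _ = 2 * M := by rw [Finset.sum_add_distrib, ← Finset.mul_sum, hw₁]; ring

lemma exists_memW_injective_lin_near [Finite D] (hd : 2 ≤ d)
    {f : D → Fin d → ℝ} (hf : Function.Injective f) {w : Fin d → ℝ} (hw : memW d w)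
    {ε : ℝ} (hε : 0 < ε) :
    ∃ w', memW d w' ∧ l1norm (w - w') ≤ ε ∧ Function.Injective (lin f w') := by
  have hd₀ : (0 : ℝ) < d := by positivity
  obtain ⟨t, ⟨ht₀, htε⟩, hinj⟩ :=
    exists_injective_lin_add_momentCurve hf w (lt_min one_pos (by positivity : 0 < ε / (2 * d)))
  have hv (i : Fin d) : 0 < (w + momentCurve d t) i :=
    add_pos_of_nonneg_of_pos (hw.1 i).1 (pow_pos ht₀ _)
  have hsum : 0 < ∑ i, (w + momentCurve d t) i :=
    Finset.sum_pos (fun i _ => hv i) (Finset.univ_nonempty_iff.mpr ⟨⟨0, by omega⟩⟩)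
  refine ⟨(∑ i, (w + momentCurve d t) i)⁻¹ • (w + momentCurve d t),
    memW_inv_sum_smul hd hv, ?_, fun x y hxy => hinj ?_⟩
  · have ht₁ : t ≤ 1 := htε.le.trans (min_le_left _ _)
    have htε' : t < ε / (2 * d) := htε.trans_le (min_le_right _ _)
    calc _ ≤ 2 * ∑ i, momentCurve d t i :=
          l1norm_sub_inv_sum_smul_add_le (fun i => (hw.1 i).1) hw.2 fun i => (pow_pos ht₀ _).le
      _ ≤ 2 * (d * t) := by gcongr; exact sum_momentCurve_le ht₀.le ht₁
      _ ≤ ε := by rw [lt_div_iff₀ (by positivity)] at htε'; linarith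
  · simp only [lin_smul] at hxy
    exact mul_left_cancel₀ (inv_ne_zero hsum.ne') hxy

lemma paretoOpt_of_injective_lin {f : D → Fin d → ℝ} {w : Fin d → ℝ}
    (hw : ∀ i, 0 ≤ w i) (hinj : Function.Injective (lin f w)) {x : D}
    (hx : ∀ y, lin f w x ≤ lin f w y) : ParetoOpt f x := by
  rintro ⟨y, hyx, hne⟩
  have hle : lin f w y ≤ lin f w x :=
    Finset.sum_le_sum fun i _ => mul_le_mul_of_nonneg_left (hyx i) (hw i)
  exact hne (congrArg f (hinj (le_antisymm hle (hx y))))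

lemma exists_unique_isMin_lin_paretoOpt [Finite D] [Nonempty D] {f : D → Fin d → ℝ}
    {w : Fin d → ℝ} (hw : ∀ i, 0 ≤ w i) (hinj : Function.Injective (lin f w)) :
    ∃ x, (∀ y, lin f w x ≤ lin f w y) ∧ (∀ y, (∀ z, lin f w y ≤ lin f w z) → y = x) ∧
      ParetoOpt f x := by
  obtain ⟨x, hx⟩ := Finite.exists_min (lin f w)
  exact ⟨x, hx, fun y hy => hinj (le_antisymm (hy x) (hx y)),
    paretoOpt_of_injective_lin hw hinj hx⟩

lemma NormalMCO.nontrivial {f : D → Fin d → ℝ} (h : NormalMCO f)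
    (hd : 2 ≤ d) : Nontrivial D := by
  obtain ⟨x, hx, -⟩ := h.1 ⟨0, by omega⟩
  obtain ⟨y, hy, -⟩ := h.1 ⟨1, by omega⟩
  exact ⟨x, y, h.2 _ _ x y (by simp [Fin.ext_iff]) hx hy⟩

lemma CollisionFree.injective {f : D → Fin d → ℝ} {lam : Fin d → ℝ}
    (h : CollisionFree f lam) {i : Fin d} (hi : 0 ≤ lam i) : Function.Injective f := by
  intro x y hxy
  by_contra hne
  have := h i x y hne
  rw [hxy, sub_self, abs_zero] at this
  linarith

lemma CollisionFree.lt_of_ne {f : D → Fin d → ℝ} {lam : Fin d → ℝ}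
    (h : CollisionFree f lam) (hf : ∀ x i, 0 ≤ f x i) {m : ℝ} (hm : ∀ x i, f x i ≤ m)
    {x y : D} (hxy : x ≠ y) (i : Fin d) : lam i < m :=
  (h i x y hxy).trans_le (abs_sub_le_of_nonneg_of_le (hf x i) (hm x i) (hf y i) (hm y i))

lemma memW.sum_mul_pos {w lam : Fin d → ℝ} (hw : memW d w) (hlam : ∀ i, 0 < lam i) :
    0 < ∑ i, w i * lam i := by
  obtain ⟨i, -, hi⟩ := Finset.exists_lt_of_sum_lt (f := 0) (g := w) (s := Finset.univ)
    (by simp [hw.2])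
  exact Finset.sum_pos' (fun j _ => mul_nonneg (hw.1 j).1 (hlam j).le)
    ⟨i, Finset.mem_univ _, mul_pos hi (hlam i)⟩

end

theorem stmt_14_general {D : Type} [Fintype D] [Nonempty D] {d : ℕ} (hd : 2 ≤ d)
    (f : D → Fin d → ℝ) (hf : ∀ x i, 0 ≤ f x i)
    (lam : Fin d → ℝ) (hlam : ∀ i, 0 < lam i)
    (hnorm : NormalMCO f) (hcf : CollisionFree f lam)
    (m : ℝ) (hm : IsGreatest {r : ℝ | ∃ (x : D) (i : Fin d), f x i = r} m)
    (w : Fin d → ℝ) (hw : memW d w) :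
    ∃ (w' : Fin d → ℝ) (x : D), memW d w' ∧
      l1norm (fun i => w i - w' i) ≤ (∑ i, w i * lam i) / (m * d) ∧
      (∀ y : D, lin f w' x ≤ lin f w' y) ∧
      (∀ y : D, (∀ z : D, lin f w' y ≤ lin f w' z) → y = x) ∧
      ParetoOpt f x := by
  let i₀ : Fin d := ⟨0, by omega⟩
  obtain ⟨a, b, hab⟩ := (hnorm.nontrivial hd).exists_pair_ne
  have hm₀ : 0 < m :=
    (hlam i₀).trans (hcf.lt_of_ne hf (fun x i => hm.2 ⟨x, i, rfl⟩) hab i₀)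
  have hε : 0 < (∑ i, w i * lam i) / (m * d) := by
    have := hw.sum_mul_pos hlam
    positivity
  obtain ⟨w', hw', hdist, hinj⟩ :=
    exists_memW_injective_lin_near hd (hcf.injective (hlam i₀).le) hw hε
  obtain ⟨x, hmin, huniq, hpareto⟩ :=
    exists_unique_isMin_lin_paretoOpt (fun i => (hw'.1 i).1) hinj
  exact ⟨w', x, hw', hdist, hmin, huniq, hpareto⟩

theorem stmt_14 {D : Type} [Fintype D] [Nonempty D] {d : ℕ} (hd : 2 ≤ d)
    (f : D → Fin d → ℝ) (hf : ∀ x i, 0 ≤ f x i)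
    (lam : Fin d → ℝ) (hlam : ∀ i, 0 < lam i)
    (hnorm : NormalMCO f) (hcf : CollisionFree f lam)
    (hneq : ∀ x y : D, ParetoOpt f x → ParetoOpt f y → f x = f y → x = y)
    (m : ℝ) (hm : IsGreatest {r : ℝ | ∃ (x : D) (i : Fin d), f x i = r} m)
    (w : Fin d → ℝ) (hw : memW d w) (hwpos : ∀ i, 0 < w i) :
    ∃ (w' : Fin d → ℝ) (x : D), memW d w' ∧
      l1norm (fun i => w i - w' i) ≤ (∑ i, w i * lam i) / (m * d) ∧
      (∀ y : D, lin f w' x ≤ lin f w' y) ∧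
      (∀ y : D, (∀ z : D, lin f w' y ≤ lin f w' z) → y = x) ∧
      ParetoOpt f x :=
  stmt_14_general hd f hf lam hlam hnorm hcf m hm w hw
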